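/- arXiv:1707.02584 — 3 statements merged into one kernel-verified Lean document; each statement's English description precedes it below -/
import Mathlib

section
/- Let A, D, B be functions from ℂ to the endomorphisms of a module over ℂ, and let a₁, a₂, d₁, d₂ : ℂ×ℂ → ℂ satisfy the commutation relations A(u)B(v) = a₁(u,v)B(v)A(u) + a₂(u,v)B(u)A(v), B(u)B(v) = B(v)B(u), and the consistency identity a₁(u,w)a₂(u,v) + a₂(u,w)a₂(w,v) = a₂(u,v)a₁(v,w) for all u, v, w. Then for all n ≥ 1 and all u, u₁,…,uₙ, the identity A(u)∏_{k=1}^{n} B(u_k) = ∏_{k=1}^{n} a₁(u,u_k) (∏_{k=1}^{n} B(u_k)) A(u) + Σ_{j=1}^{n} a₂(u,u_j) ∏_{k≠j} a₁(u_j,u_k) B(u) (∏_{k≠j} B(u_k)) A(u_j) holds. -/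
/-!
Induct on the number of `B` operators, peeling off the first one, `B v`. Moving `A u` past it
gives `a₁(u,v) B(v) A(u)` plus the exchange term `a₂(u,v) B(u) A(v)`; the induction hypothesis,
applied at both `u` and `v`, carries `A(u)` resp. `A(v)` through the remaining product. The
exchange term with `A(v)` at the end is the new `j = v` summand, and the two contributions ending
in `A(w)` for an old index `w` merge into a single summand by the consistency identity at
`(u, w, v)`.
-/

section
variable {R : Type*} [Ring R] [Algebra ℂ R] (A B : ℂ → R) (a1 a2 : ℂ → ℂ → ℂ)

theorem A_mul_B_mul (hAB : ∀ u v, A u * B v = a1 u v • (B v * A u) + a2 u v • (B u * A v))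
    (u v : ℂ) (X : R) :
    A u * (B v * X) = a1 u v • (B v * (A u * X)) + a2 u v • (B u * (A v * X)) := by
  rw [← mul_assoc, hAB, add_mul, smul_mul_assoc, smul_mul_assoc, mul_assoc, mul_assoc]

theorem smul_B_mul_add_smul_B_mul (hBB : ∀ u v, B u * B v = B v * B u)
    (hId : ∀ u v w, a1 u w * a2 u v + a2 u w * a2 w v = a2 u v * a1 v w)
    (u v w c : ℂ) (X : R) :
    a1 u v • (B v * ((a2 u w * c) • (B u * X))) + a2 u v • (B u * ((a2 v w * c) • (B v * X)))
      = (a2 u w * (a1 w v * c)) • (B u * (B v * X)) := by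
  simp only [mul_smul_comm, smul_smul, ← mul_assoc, hBB v u, ← add_smul]
  congr 1
  linear_combination c * hId u w v

theorem A_mul_list_prod_B
    (hAB : ∀ u v, A u * B v = a1 u v • (B v * A u) + a2 u v • (B u * A v))
    (hBB : ∀ u v, B u * B v = B v * B u)
    (hId : ∀ u v w, a1 u w * a2 u v + a2 u w * a2 w v = a2 u v * a1 v w)
    {ι : Type*} [DecidableEq ι] (us : ι → ℂ) (l : List ι) (hl : l.Nodup) (u : ℂ) :
    A u * (l.map (fun k => B (us k))).prod
    = (∏ k ∈ l.toFinset, a1 u (us k)) • ((l.map (fun k => B (us k))).prod * A u)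
      + ∑ j ∈ l.toFinset,
          (a2 u (us j) * ∏ k ∈ l.toFinset.erase j, a1 (us j) (us k)) •
            (B u * ((l.filter (fun k => k ≠ j)).map (fun k => B (us k))).prod * A (us j)) := by
  induction l generalizing u with
  | nil => simp
  | cons a t ih =>
    obtain ⟨ha, ht⟩ := List.nodup_cons.1 hl
    have ha' : a ∉ t.toFinset := by simpa using ha
    have hfilter_self : (a :: t).filter (fun k => k ≠ a) = t := by
      rw [List.filter_cons_of_neg (by simp), List.filter_eq_self]
      intro k hk
      simpa using ne_of_mem_of_not_mem hk ha
    have hterm : ∀ j ∈ t.toFinset,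
        (a2 u (us j) * ∏ k ∈ (insert a t.toFinset).erase j, a1 (us j) (us k)) •
            (B u * (((a :: t).filter (fun k => k ≠ j)).map (fun k => B (us k))).prod * A (us j))
          = a1 u (us a) • (B (us a) * ((a2 u (us j) * ∏ k ∈ t.toFinset.erase j, a1 (us j) (us k)) •
              (B u * ((t.filter (fun k => k ≠ j)).map (fun k => B (us k))).prod * A (us j))))
            + a2 u (us a) • (B u * ((a2 (us a) (us j) * ∏ k ∈ t.toFinset.erase j, a1 (us j) (us k)) •
              (B (us a) * ((t.filter (fun k => k ≠ j)).map (fun k => B (us k))).prod * A (us j)))) := by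
      intro j hj
      have hne : a ≠ j := (ne_of_mem_of_not_mem hj ha').symm
      rw [Finset.erase_insert_of_ne hne, Finset.prod_insert (by simp [ha']),
        List.filter_cons_of_pos (by simpa using hne), List.map_cons, List.prod_cons]
      simp only [mul_assoc]
      exact (smul_B_mul_add_smul_B_mul B a1 a2 hBB hId _ _ _ _ _).symm
    simp only [List.map_cons, List.prod_cons, List.toFinset_cons]
    rw [Finset.prod_insert ha', Finset.sum_insert ha', Finset.sum_congr rfl hterm,
      Finset.erase_insert ha', hfilter_self, A_mul_B_mul A B a1 a2 hAB, ih ht u, ih ht (us a),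
      Finset.sum_add_distrib, ← Finset.smul_sum, ← Finset.smul_sum, ← Finset.mul_sum,
      ← Finset.mul_sum]
    simp only [mul_add, mul_smul_comm, mul_assoc]
    module

end

theorem stmt_6_general {R : Type*} [Ring R] [Algebra ℂ R]
    (A B : ℂ → R) (a1 a2 : ℂ → ℂ → ℂ)
    (hAB : ∀ u v, A u * B v = a1 u v • (B v * A u) + a2 u v • (B u * A v))
    (hBB : ∀ u v, B u * B v = B v * B u)
    (hId : ∀ u v w, a1 u w * a2 u v + a2 u w * a2 w v = a2 u v * a1 v w)
    (n : ℕ) (u : ℂ) (us : ℕ → ℂ) :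
    A u * ((List.range n).map (fun k => B (us k))).prod
    = (∏ k ∈ Finset.range n, a1 u (us k)) •
        (((List.range n).map (fun k => B (us k))).prod * A u)
      + ∑ j ∈ Finset.range n,
          (a2 u (us j) * ∏ k ∈ (Finset.range n).erase j, a1 (us j) (us k)) •
            (B u * (((List.range n).filter (fun k => k ≠ j)).map
                (fun k => B (us k))).prod * A (us j)) := by
  simpa only [List.toFinset_range] using
    A_mul_list_prod_B A B a1 a2 hAB hBB hId us (List.range n) List.nodup_range u

theorem stmt_6 {R : Type*} [Ring R] [Algebra ℂ R]
    (A B : ℂ → R) (a1 a2 : ℂ → ℂ → ℂ)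
    (hAB : ∀ u v, A u * B v = a1 u v • (B v * A u) + a2 u v • (B u * A v))
    (hBB : ∀ u v, B u * B v = B v * B u)
    (hId : ∀ u v w, a1 u w * a2 u v + a2 u w * a2 w v = a2 u v * a1 v w)
    (n : ℕ) (hn : 1 ≤ n) (u : ℂ) (us : ℕ → ℂ) :
    A u * ((List.range n).map (fun k => B (us k))).prod
    = (∏ k ∈ Finset.range n, a1 u (us k)) •
        (((List.range n).map (fun k => B (us k))).prod * A u)
      + ∑ j ∈ Finset.range n,
          (a2 u (us j) * ∏ k ∈ (Finset.range n).erase j, a1 (us j) (us k)) •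
            (B u * (((List.range n).filter (fun k => k ≠ j)).map
                (fun k => B (us k))).prod * A (us j)) :=
  stmt_6_general A B a1 a2 hAB hBB hId n u us
end

section
/- Under the hypotheses of the previous commutation setup applied to both A and D (with coefficients a₁, a₂ and d₁, d₂ respectively and the corresponding consistency identities), if Ψ₀ is a vector with A(u)Ψ₀ = α(u)Ψ₀ and D(u)Ψ₀ = δ(u)Ψ₀ for scalar functions α, δ, and if the Bethe equations α(u_k)a₂(u,u_k)∏_{i≠k} a₁(u_k,u_i) + δ(u_k)d₂(u,u_k)∏_{i≠k} d₁(u_k,u_i) = 0 hold for all 1 ≤ k ≤ n, then T(u) = A(u) + D(u) satisfies T(u)Ψₙ = τₙ(u)Ψₙ where Ψₙ = B(u₁)⋯B(uₙ)Ψ₀ and τₙ(u) = α(u)∏_{k=1}^{n} a₁(u,u_k) + δ(u)∏_{k=1}^{n} d₁(u,u_k). -/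
/-!
Commuting `A(u)` through `B(u₁)⋯B(uₙ)` with the exchange relation leaves a wanted term
`∏ₖ a₁(u,uₖ) · B(u₁)⋯B(uₙ) A(u)` plus, for each `k`, an unwanted term in which `B(uₖ)` is
replaced by `B(u)` and `A(u)` by `A(uₖ)`. By induction on the number of factors, the
consistency identity for `a₁, a₂` is exactly what keeps the unwanted coefficient in the closed
form `a₂(u,uₖ) ∏_{i≠k} a₁(uₖ,uᵢ)`. On the vacuum `Ψ₀` the unwanted terms coming from `A(u)` and
from `D(u)` are multiples of the same vectors `B(u) ∏_{i≠k} B(uᵢ) Ψ₀`, and their coefficients add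
up to the left-hand sides of the Bethe equations, hence vanish.
-/

open Finset

namespace Bethe

variable {ι κ K M : Type*} [CommSemiring K] [Semiring M] [Algebra K M]
  (B : ι → M) (hB : ∀ u v, Commute (B u) (B v)) (f : κ → ι)

def prodB (s : Finset κ) : M :=
  s.noncommProd (fun k => B (f k)) fun a _ b _ _ => hB (f a) (f b)

@[simp]
theorem prodB_empty : prodB B hB f ∅ = 1 :=
  noncommProd_empty _ _

theorem prodB_insert [DecidableEq κ] {s : Finset κ} {k : κ} (hk : k ∉ s) :
    prodB B hB f (insert k s) = B (f k) * prodB B hB f s :=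
  noncommProd_insert_of_notMem _ _ _ _ hk

theorem prodB_range (us : ℕ → ι) (n : ℕ) :
    prodB B hB us (range n) = ((List.range n).map fun k => B (us k)).prod := by
  simp only [prodB, Finset.noncommProd, range_val, ← Multiset.coe_range, Multiset.map_coe,
    Multiset.noncommProd_coe]

theorem mul_prodB [DecidableEq κ] (A : ι → M) (a₁ a₂ : ι → ι → K)
    (hAB : ∀ u v, A u * B v = a₁ u v • (B v * A u) + a₂ u v • (B u * A v))
    (ha : ∀ u v w, a₁ u w * a₂ u v + a₂ u w * a₂ w v = a₂ u v * a₁ v w)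
    (s : Finset κ) (u : ι) :
    A u * prodB B hB f s =
      (∏ k ∈ s, a₁ u (f k)) • (prodB B hB f s * A u) +
        ∑ k ∈ s, (a₂ u (f k) * ∏ i ∈ s.erase k, a₁ (f k) (f i)) •
          (B u * prodB B hB f (s.erase k) * A (f k)) := by
  induction s using Finset.induction_on generalizing u with
  | empty => simp
  | insert n s hn ih =>
    rw [prodB_insert _ _ _ hn, prod_insert hn, sum_insert hn, erase_insert hn,
      ← mul_assoc, hAB, add_mul, smul_mul_assoc, smul_mul_assoc, mul_assoc, mul_assoc, ih, ih]
    simp only [mul_add, mul_sum, mul_smul_comm, smul_add, smul_smul, smul_sum]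
    rw [add_add_add_comm, ← sum_add_distrib, ← add_assoc]
    congr 1
    · simp only [mul_assoc]
    refine sum_congr rfl fun k hk => ?_
    have hkn : k ≠ n := ne_of_mem_of_not_mem hk hn
    have hn' : n ∉ s.erase k := fun h => hn (mem_of_mem_erase h)
    rw [erase_insert_of_ne hkn.symm, prodB_insert _ _ _ hn', prod_insert hn']
    simp only [← mul_assoc]
    rw [(hB (f n) u).eq, ← add_smul]
    congr 1
    rw [← add_mul, ha]

section Operators

variable {ι κ K V : Type*} [DecidableEq κ] [CommSemiring K] [AddCommMonoid V] [Module K V]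
  (B : ι → Module.End K V) (hB : ∀ u v, Commute (B u) (B v)) (f : κ → ι)

theorem apply_prodB_of_vacuum (A : ι → Module.End K V) (a₁ a₂ : ι → ι → K)
    (hAB : ∀ u v, A u * B v = a₁ u v • (B v * A u) + a₂ u v • (B u * A v))
    (ha : ∀ u v w, a₁ u w * a₂ u v + a₂ u w * a₂ w v = a₂ u v * a₁ v w)
    (α : ι → K) (Ψ₀ : V) (hA₀ : ∀ u, A u Ψ₀ = α u • Ψ₀) (s : Finset κ) (u : ι) :
    A u (prodB B hB f s Ψ₀) =
      (α u * ∏ k ∈ s, a₁ u (f k)) • prodB B hB f s Ψ₀ +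
        ∑ k ∈ s, (α (f k) * a₂ u (f k) * ∏ i ∈ s.erase k, a₁ (f k) (f i)) •
          B u (prodB B hB f (s.erase k) Ψ₀) := by
  have h := congrArg (· Ψ₀) (mul_prodB B hB f A a₁ a₂ hAB ha s u)
  simp only [Module.End.mul_apply, LinearMap.add_apply, LinearMap.smul_apply,
    LinearMap.sum_apply, hA₀, map_smul, smul_smul] at h
  rw [h]
  congr 1
  · rw [mul_comm]
  · refine sum_congr rfl fun k _ => ?_
    rw [mul_comm, mul_assoc]

theorem add_apply_prodB_of_bethe (A D : ι → Module.End K V) (a₁ a₂ d₁ d₂ : ι → ι → K)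
    (hAB : ∀ u v, A u * B v = a₁ u v • (B v * A u) + a₂ u v • (B u * A v))
    (hDB : ∀ u v, D u * B v = d₁ u v • (B v * D u) + d₂ u v • (B u * D v))
    (ha : ∀ u v w, a₁ u w * a₂ u v + a₂ u w * a₂ w v = a₂ u v * a₁ v w)
    (hd : ∀ u v w, d₁ u w * d₂ u v + d₂ u w * d₂ w v = d₂ u v * d₁ v w)
    (α δ : ι → K) (Ψ₀ : V) (hA₀ : ∀ u, A u Ψ₀ = α u • Ψ₀) (hD₀ : ∀ u, D u Ψ₀ = δ u • Ψ₀)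
    (s : Finset κ) (u : ι)
    (hBethe : ∀ k ∈ s, α (f k) * a₂ u (f k) * ∏ i ∈ s.erase k, a₁ (f k) (f i)
        + δ (f k) * d₂ u (f k) * ∏ i ∈ s.erase k, d₁ (f k) (f i) = 0) :
    (A u + D u) (prodB B hB f s Ψ₀) =
      (α u * ∏ k ∈ s, a₁ u (f k) + δ u * ∏ k ∈ s, d₁ u (f k)) • prodB B hB f s Ψ₀ := by
  have hunwanted : ∀ k ∈ s,
      (α (f k) * a₂ u (f k) * ∏ i ∈ s.erase k, a₁ (f k) (f i)) • B u (prodB B hB f (s.erase k) Ψ₀)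
        + (δ (f k) * d₂ u (f k) * ∏ i ∈ s.erase k, d₁ (f k) (f i)) •
          B u (prodB B hB f (s.erase k) Ψ₀) = 0 := fun k hk => by
    rw [← add_smul, hBethe k hk, zero_smul]
  rw [LinearMap.add_apply, apply_prodB_of_vacuum B hB f A a₁ a₂ hAB ha α Ψ₀ hA₀,
    apply_prodB_of_vacuum B hB f D d₁ d₂ hDB hd δ Ψ₀ hD₀, add_add_add_comm, ← sum_add_distrib,
    sum_congr rfl hunwanted, sum_const_zero, add_zero, add_smul]

end Operators

end Bethe

open Bethe in
theorem stmt_7 {V : Type*} [AddCommGroup V] [Module ℂ V]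
    (A D B : ℂ → Module.End ℂ V) (a1 a2 d1 d2 : ℂ → ℂ → ℂ) (α δ : ℂ → ℂ)
    (Ψ₀ : V)
    (hAB : ∀ u v, A u * B v = a1 u v • (B v * A u) + a2 u v • (B u * A v))
    (hDB : ∀ u v, D u * B v = d1 u v • (B v * D u) + d2 u v • (B u * D v))
    (hBB : ∀ u v, B u * B v = B v * B u)
    (hIda : ∀ u v w, a1 u w * a2 u v + a2 u w * a2 w v = a2 u v * a1 v w)
    (hIdd : ∀ u v w, d1 u w * d2 u v + d2 u w * d2 w v = d2 u v * d1 v w)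
    (hA0 : ∀ u, A u Ψ₀ = α u • Ψ₀) (hD0 : ∀ u, D u Ψ₀ = δ u • Ψ₀)
    (n : ℕ) (u : ℂ) (us : ℕ → ℂ)
    (hBethe : ∀ k ∈ Finset.range n,
      α (us k) * a2 u (us k) * ∏ i ∈ (Finset.range n).erase k, a1 (us k) (us i)
        + δ (us k) * d2 u (us k) * ∏ i ∈ (Finset.range n).erase k, d1 (us k) (us i) = 0) :
    (A u + D u) (((List.range n).map (fun k => B (us k))).prod Ψ₀)
    = (α u * ∏ k ∈ Finset.range n, a1 u (us k)
        + δ u * ∏ k ∈ Finset.range n, d1 u (us k)) •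
        (((List.range n).map (fun k => B (us k))).prod Ψ₀) := by
  rw [← prodB_range B hBB]
  exact add_apply_prodB_of_bethe B hBB us A D a1 a2 d1 d2 hAB hDB hIda hIdd α δ Ψ₀ hA0 hD0
    (Finset.range n) u hBethe
end

section
/- The diagonal K-matrix K⁻(u) = diag(u+ζ, −u+ζ) together with the rational six-vertex R-matrix (r₁(w)=w+ξ, r₂(w)=w, r₃(w)=ξ) satisfies the reflection equation R(u−v)K₁⁻(u)R(u+v)K₂⁻(v) = K₂⁻(v)R(u+v)K₁⁻(u)R(u−v) as 4×4 matrices, for all complex u, v. -/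
open Kronecker

/-- The rational six-vertex `R`-matrix with `r1 w = w + ξ`, `r2 w = w`,
`r3 w = ξ`, indexed by `Fin 2 × Fin 2`. -/
def Rrat (ξ : ℂ) (w : ℂ) : Matrix (Fin 2 × Fin 2) (Fin 2 × Fin 2) ℂ :=
  fun p q =>
    if p = q then (if p.1 = p.2 then w + ξ else w)
    else if p.1 = q.2 ∧ p.2 = q.1 then ξ else 0

/-- The diagonal reflection matrix `K⁻(u) = diag (u + ζ, -u + ζ)`. -/
def Kminus (ζ : ℂ) (u : ℂ) : Matrix (Fin 2) (Fin 2) ℂ :=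
  Matrix.diagonal ![u + ζ, -u + ζ]

set_option maxHeartbeats 4000000 in
theorem stmt_16 (ξ ζ u v : ℂ) :
    Rrat ξ (u - v) * (Kminus ζ u ⊗ₖ (1 : Matrix (Fin 2) (Fin 2) ℂ)) *
        Rrat ξ (u + v) * ((1 : Matrix (Fin 2) (Fin 2) ℂ) ⊗ₖ Kminus ζ v)
    = ((1 : Matrix (Fin 2) (Fin 2) ℂ) ⊗ₖ Kminus ζ v) * Rrat ξ (u + v) *
        (Kminus ζ u ⊗ₖ (1 : Matrix (Fin 2) (Fin 2) ℂ)) * Rrat ξ (u - v) := by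
  ext ⟨i, j⟩ ⟨k, l⟩
  fin_cases i <;> fin_cases j <;> fin_cases k <;> fin_cases l <;>
    simp [Matrix.mul_apply, Fintype.sum_prod_type, Fin.sum_univ_succ,
      Rrat, Kminus, Matrix.kroneckerMap_apply, Matrix.one_apply, Matrix.diagonal,
      Prod.ext_iff] <;> ring
end
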